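/- arXiv:1510.04014 — 6 statements merged into one kernel-verified Lean document; each statement's English description precedes it below -/
import Mathlib

section
/- Let s : X → E be a section of π with local action function ρ_s, and let x₀ ∈ X be such that t ↦ ρ_s(x₀, t) is a group homomorphism T → G. Then ρ_s is constant along the T-orbit of x₀: for every u ∈ T and every t ∈ T one has ρ_s(u • x₀, t) = ρ_s(x₀, t). (Paper: the key algebraic step in the proof of the converse part of Lemma 2.3.) -/
/-!
Both `ρ x (t * u)` and `ρ (u • x) t * ρ x u` are elements `g` with `(t * u) • s x = s ((t * u) • x) · g`,
and `G` acts freely on the fibre of `π` containing these points, so `ρ` satisfies the cocycle identity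
`ρ x (t * u) = ρ (u • x) t * ρ x u`. When `ρ x₀` is a homomorphism, the left side at `x₀` is
`ρ x₀ t * ρ x₀ u`, and cancelling `ρ x₀ u` gives the claim.
-/

section LocalAction

variable {T G X E : Type*} [Group T] [Group G]
  {actX : T → X → X} {actE : T → E → E} {ract : E → G → E} {pr : E → X} {s : X → E}
  {ρ : X → T → G}

theorem localAction_cocycle
    (hXmul : ∀ t u x, actX (t * u) x = actX t (actX u x))
    (hEmul : ∀ t u z, actE (t * u) z = actE t (actE u z))
    (hGmul : ∀ z g h, ract z (g * h) = ract (ract z g) h)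
    (hcomm : ∀ t z g, actE t (ract z g) = ract (actE t z) g)
    (hpr : ∀ t z, pr (actE t z) = actX t (pr z))
    (hfib : ∀ z z', pr z = pr z' → ∃! g : G, z' = ract z g)
    (hs : ∀ x, pr (s x) = x)
    (hρ : ∀ x t, actE t (s x) = ract (s (actX t x)) (ρ x t))
    (x : X) (t u : T) :
    ρ x (t * u) = ρ (actX u x) t * ρ x u := by
  have hfiber : pr (s (actX (t * u) x)) = pr (actE (t * u) (s x)) := by rw [hs, hpr, hs]
  refine (hfib _ _ hfiber).unique (hρ x (t * u)) ?_
  rw [hEmul, hρ x u, hcomm, hρ (actX u x) t, ← hGmul, ← hXmul]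

end LocalAction

theorem stmt_4_general {T G X E : Type*} [Group T] [Group G]
    (actX : T → X → X)
    (hXmul : ∀ t u x, actX (t * u) x = actX t (actX u x))
    (actE : T → E → E)
    (hEmul : ∀ t u z, actE (t * u) z = actE t (actE u z))
    (ract : E → G → E)
    (hGmul : ∀ z g h, ract z (g * h) = ract (ract z g) h)
    (hcomm : ∀ t z g, actE t (ract z g) = ract (actE t z) g)
    (pr : E → X)
    (hpr : ∀ t z, pr (actE t z) = actX t (pr z))
    (hfib : ∀ z z', pr z = pr z' → ∃! g : G, z' = ract z g)
    (s : X → E) (hs : ∀ x, pr (s x) = x)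
    (ρ : X → T → G)
    (hρ : ∀ x t, actE t (s x) = ract (s (actX t x)) (ρ x t))
    (x₀ : X)
    (hhom : ∀ t u : T, ρ x₀ (t * u) = ρ x₀ t * ρ x₀ u) :
    ∀ u t : T, ρ (actX u x₀) t = ρ x₀ t := by
  intro u t
  have hcocycle := localAction_cocycle hXmul hEmul hGmul hcomm hpr hfib hs hρ x₀ t u
  exact mul_right_cancel (hcocycle.symm.trans (hhom t u))

/-- If t ↦ ρ_s(x₀,t) is a homomorphism, then ρ_s is constant along the
T-orbit of x₀ (key step in the converse part of Lemma 2.3). -/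
theorem stmt_4 {T G X E : Type*} [Group T] [Group G]
    (actX : T → X → X)
    (hX1 : ∀ x, actX 1 x = x)
    (hXmul : ∀ t u x, actX (t * u) x = actX t (actX u x))
    (actE : T → E → E)
    (hE1 : ∀ z, actE 1 z = z)
    (hEmul : ∀ t u z, actE (t * u) z = actE t (actE u z))
    (ract : E → G → E)
    (hG1 : ∀ z, ract z 1 = z)
    (hGmul : ∀ z g h, ract z (g * h) = ract (ract z g) h)
    (hcomm : ∀ t z g, actE t (ract z g) = ract (actE t z) g)
    (pr : E → X)
    (hpr : ∀ t z, pr (actE t z) = actX t (pr z))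
    (hfib : ∀ z z', pr z = pr z' → ∃! g : G, z' = ract z g)
    (s : X → E) (hs : ∀ x, pr (s x) = x)
    (ρ : X → T → G)
    (hρ : ∀ x t, actE t (s x) = ract (s (actX t x)) (ρ x t))
    (x₀ : X)
    (hhom : ∀ t u : T, ρ x₀ (t * u) = ρ x₀ t * ρ x₀ u) :
    ∀ u t : T, ρ (actX u x₀) t = ρ x₀ t :=
  stmt_4_general actX hXmul actE hEmul ract hGmul hcomm pr hpr hfib s hs ρ hρ x₀ hhom
end

section
/- Suppose in addition X is a topological space, G carries a Hausdorff topology, for each fixed t ∈ T the map x ↦ ρ_s(x, t) is continuous, and x₀ ∈ X is a point whose T-orbit {u • x₀ : u ∈ T} is dense in X. If t ↦ ρ_s(x₀, t) is a group homomorphism T → G, then ρ_s(x, t) = ρ_s(x₀, t) for all x ∈ X and t ∈ T, i.e. ρ_s is independent of the point x. (Paper: Lemma 2.3, converse part.) -/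
/-!
The local action function is a cocycle: `ρ x (t * u) = ρ (u • x) t * ρ x u`. When `ρ x₀` is
multiplicative, cancelling `ρ x₀ u` shows that `ρ (· , t)` is constant on the orbit of `x₀`, and a
continuous map into a Hausdorff space that is constant on a dense set is constant.
-/

theorem local_action_mul {T G X E : Type*} [Group T] [Group G]
    {actX : T → X → X} (hXmul : ∀ t u x, actX (t * u) x = actX t (actX u x))
    {actE : T → E → E} (hEmul : ∀ t u z, actE (t * u) z = actE t (actE u z))
    {ract : E → G → E} (hGmul : ∀ z g h, ract z (g * h) = ract (ract z g) h)
    (hcomm : ∀ t z g, actE t (ract z g) = ract (actE t z) g)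
    {pr : E → X} (hpr : ∀ t z, pr (actE t z) = actX t (pr z))
    (hfib : ∀ z z', pr z = pr z' → ∃! g : G, z' = ract z g)
    {s : X → E} (hs : ∀ x, pr (s x) = x)
    {ρ : X → T → G} (hρ : ∀ x t, actE t (s x) = ract (s (actX t x)) (ρ x t))
    (x : X) (t u : T) :
    ρ x (t * u) = ρ (actX u x) t * ρ x u := by
  have hfiber : pr (s (actX (t * u) x)) = pr (actE (t * u) (s x)) := by rw [hpr, hs, hs]
  refine (hfib _ _ hfiber).unique (hρ x (t * u)) ?_
  rw [hEmul, hρ x u, hcomm, hρ (actX u x) t, ← hGmul, hXmul]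

theorem stmt_5_general {T G X E : Type*} [Group T] [Group G]
    [TopologicalSpace X] [TopologicalSpace G] [T2Space G]
    (actX : T → X → X)
    (hXmul : ∀ t u x, actX (t * u) x = actX t (actX u x))
    (actE : T → E → E)
    (hEmul : ∀ t u z, actE (t * u) z = actE t (actE u z))
    (ract : E → G → E)
    (hGmul : ∀ z g h, ract z (g * h) = ract (ract z g) h)
    (hcomm : ∀ t z g, actE t (ract z g) = ract (actE t z) g)
    (pr : E → X)
    (hpr : ∀ t z, pr (actE t z) = actX t (pr z))
    (hfib : ∀ z z', pr z = pr z' → ∃! g : G, z' = ract z g)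
    (s : X → E) (hs : ∀ x, pr (s x) = x)
    (ρ : X → T → G)
    (hρ : ∀ x t, actE t (s x) = ract (s (actX t x)) (ρ x t))
    (hcont : ∀ t : T, Continuous fun x => ρ x t)
    (x₀ : X)
    (hdense : Dense (Set.range fun u : T => actX u x₀))
    (hhom : ∀ t u : T, ρ x₀ (t * u) = ρ x₀ t * ρ x₀ u) :
    ∀ x t, ρ x t = ρ x₀ t := by
  have horbit : ∀ t u, ρ (actX u x₀) t = ρ x₀ t := fun t u =>
    mul_right_cancel <|
      (local_action_mul hXmul hEmul hGmul hcomm hpr hfib hs hρ x₀ t u).symm.trans (hhom t u)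
  intro x t
  refine congrFun (Continuous.ext_on hdense (hcont t) continuous_const ?_) x
  rintro _ ⟨u, rfl⟩
  exact horbit t u

/-- Lemma 2.3, converse part: if ρ_s(x₀,·) is a homomorphism and the orbit of
x₀ is dense, then ρ_s is independent of the point. -/
theorem stmt_5 {T G X E : Type*} [Group T] [Group G]
    [TopologicalSpace X] [TopologicalSpace G] [T2Space G]
    (actX : T → X → X)
    (hX1 : ∀ x, actX 1 x = x)
    (hXmul : ∀ t u x, actX (t * u) x = actX t (actX u x))
    (actE : T → E → E)
    (hE1 : ∀ z, actE 1 z = z)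
    (hEmul : ∀ t u z, actE (t * u) z = actE t (actE u z))
    (ract : E → G → E)
    (hG1 : ∀ z, ract z 1 = z)
    (hGmul : ∀ z g h, ract z (g * h) = ract (ract z g) h)
    (hcomm : ∀ t z g, actE t (ract z g) = ract (actE t z) g)
    (pr : E → X)
    (hpr : ∀ t z, pr (actE t z) = actX t (pr z))
    (hfib : ∀ z z', pr z = pr z' → ∃! g : G, z' = ract z g)
    (s : X → E) (hs : ∀ x, pr (s x) = x)
    (ρ : X → T → G)
    (hρ : ∀ x t, actE t (s x) = ract (s (actX t x)) (ρ x t))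
    (hcont : ∀ t : T, Continuous fun x => ρ x t)
    (x₀ : X)
    (hdense : Dense (Set.range fun u : T => actX u x₀))
    (hhom : ∀ t u : T, ρ x₀ (t * u) = ρ x₀ t * ρ x₀ u) :
    ∀ x t, ρ x t = ρ x₀ t :=
  stmt_5_general actX hXmul actE hEmul ract hGmul hcomm pr hpr hfib s hs ρ hρ hcont x₀ hdense hhom
end

section
/- Let H and K be groups and T = H × K. Suppose x₀ ∈ X is fixed by H × {1}, i.e. (h, 1) • x₀ = x₀ for all h ∈ H. Let s and s' be sections of π whose local action functions are independent of the point of X and factor through the projection to H, i.e. there are maps ρ, ρ' : T → G with ρ_s(x, t) = ρ(t), ρ_{s'}(x, t) = ρ'(t) for all x, t, and ρ(h, k) = ρ(h, 1), ρ'(h, k) = ρ'(h, 1) for all h ∈ H, k ∈ K. Let g ∈ G be the unique element with s'(x₀) = s(x₀) · g. Then ρ'(t) = g⁻¹ · ρ(t) · g for all t ∈ T. (Paper: Lemma 2.9, the homomorphisms induced by different distinguished sections are conjugate in G.) -/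
/-!
Acting by t on s'(x₀) = s(x₀)·g and moving t past the right G-action in two ways gives
t • s'(x₀) = s(x₀)·(g ρ'(t)) = s(x₀)·(ρ(t) g) whenever t fixes x₀; freeness of the G-action on
the fibre then forces g ρ'(t) = ρ(t) g. Every (h, k) has the same local actions as (h, 1), which
fixes x₀.
-/

theorem localAction_conj_of_fixed {T G X E : Type*} [Group G]
    {actX : T → X → X} {actE : T → E → E} {ract : E → G → E} {pr : E → X}
    (hGmul : ∀ z g h, ract z (g * h) = ract (ract z g) h)
    (hcomm : ∀ t z g, actE t (ract z g) = ract (actE t z) g)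
    (hpr : ∀ t z, pr (actE t z) = actX t (pr z))
    (hfib : ∀ z z', pr z = pr z' → ∃! g : G, z' = ract z g)
    {s s' : X → E} (hs : ∀ x, pr (s x) = x) (hs' : ∀ x, pr (s' x) = x)
    {ρ ρ' : T → G}
    (hρ : ∀ x t, actE t (s x) = ract (s (actX t x)) (ρ t))
    (hρ' : ∀ x t, actE t (s' x) = ract (s' (actX t x)) (ρ' t))
    {x₀ : X} {g : G} (hg : s' x₀ = ract (s x₀) g)
    {t : T} (ht : actX t x₀ = x₀) :
    ρ' t = g⁻¹ * ρ t * g := by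
  have via_s' : actE t (s' x₀) = ract (s x₀) (g * ρ' t) := by
    rw [hρ' x₀ t, ht, hg, hGmul]
  have via_s : actE t (s' x₀) = ract (s x₀) (ρ t * g) := by
    rw [hg, hcomm, hρ x₀ t, ht, ← hGmul]
  have same_fibre : pr (s x₀) = pr (actE t (s' x₀)) := by
    rw [hpr, hs', ht, hs]
  have key : g * ρ' t = ρ t * g := (hfib _ _ same_fibre).unique via_s' via_s
  rw [mul_assoc, ← key, inv_mul_cancel_left]

theorem stmt_8_general {H K G X E : Type*} [Group K] [Group G]
    (actX : H × K → X → X)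
    (actE : H × K → E → E)
    (ract : E → G → E)
    (hGmul : ∀ z g h, ract z (g * h) = ract (ract z g) h)
    (hcomm : ∀ t z g, actE t (ract z g) = ract (actE t z) g)
    (pr : E → X)
    (hpr : ∀ t z, pr (actE t z) = actX t (pr z))
    (hfib : ∀ z z', pr z = pr z' → ∃! g : G, z' = ract z g)
    (x₀ : X) (hx₀ : ∀ h : H, actX (h, 1) x₀ = x₀)
    (s : X → E) (hs : ∀ x, pr (s x) = x)
    (ρ : H × K → G)
    (hρ : ∀ x t, actE t (s x) = ract (s (actX t x)) (ρ t))
    (hρfac : ∀ (h : H) (k : K), ρ (h, k) = ρ (h, 1))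
    (s' : X → E) (hs'sec : ∀ x, pr (s' x) = x)
    (ρ' : H × K → G)
    (hρ' : ∀ x t, actE t (s' x) = ract (s' (actX t x)) (ρ' t))
    (hρ'fac : ∀ (h : H) (k : K), ρ' (h, k) = ρ' (h, 1))
    (g : G) (hg : s' x₀ = ract (s x₀) g) :
    ∀ t : H × K, ρ' t = g⁻¹ * ρ t * g := by
  rintro ⟨h, k⟩
  rw [hρfac, hρ'fac]
  exact localAction_conj_of_fixed hGmul hcomm hpr hfib hs hs'sec hρ hρ' hg (hx₀ h)

/-- Lemma 2.9: the homomorphisms induced by two distinguished sections are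
conjugate in G, via the element g relating the sections at a point fixed by
H × {1}. -/
theorem stmt_8 {H K G X E : Type*} [Group H] [Group K] [Group G]
    (actX : H × K → X → X)
    (hX1 : ∀ x, actX 1 x = x)
    (hXmul : ∀ t u x, actX (t * u) x = actX t (actX u x))
    (actE : H × K → E → E)
    (hE1 : ∀ z, actE 1 z = z)
    (hEmul : ∀ t u z, actE (t * u) z = actE t (actE u z))
    (ract : E → G → E)
    (hG1 : ∀ z, ract z 1 = z)
    (hGmul : ∀ z g h, ract z (g * h) = ract (ract z g) h)
    (hcomm : ∀ t z g, actE t (ract z g) = ract (actE t z) g)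
    (pr : E → X)
    (hpr : ∀ t z, pr (actE t z) = actX t (pr z))
    (hfib : ∀ z z', pr z = pr z' → ∃! g : G, z' = ract z g)
    (x₀ : X) (hx₀ : ∀ h : H, actX (h, 1) x₀ = x₀)
    (s : X → E) (hs : ∀ x, pr (s x) = x)
    (ρ : H × K → G)
    (hρ : ∀ x t, actE t (s x) = ract (s (actX t x)) (ρ t))
    (hρfac : ∀ (h : H) (k : K), ρ (h, k) = ρ (h, 1))
    (s' : X → E) (hs'sec : ∀ x, pr (s' x) = x)
    (ρ' : H × K → G)
    (hρ' : ∀ x t, actE t (s' x) = ract (s' (actX t x)) (ρ' t))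
    (hρ'fac : ∀ (h : H) (k : K), ρ' (h, k) = ρ' (h, 1))
    (g : G) (hg : s' x₀ = ract (s x₀) g) :
    ∀ t : H × K, ρ' t = g⁻¹ * ρ t * g :=
  stmt_8_general actX actE ract hGmul hcomm pr hpr hfib x₀ hx₀ s hs ρ hρ hρfac s' hs'sec ρ' hρ'
    hρ'fac g hg
end

section
/- Let T and G be topological groups and E a Hausdorff topological space carrying a continuous left T-action and a continuous right G-action that commute; suppose the right G-action is free (z · g = z implies g = 1), and let π : E → X be a map whose fibers are exactly the G-orbits. Fix e ∈ E whose combined orbit {t • (e · g) : t ∈ T, g ∈ G} is dense in E. Let Aut_T(E) denote the group, under composition, of all homeomorphisms Φ : E → E satisfying π ∘ Φ = π, Φ(t • z) = t • Φ(z), and Φ(z · g) = Φ(z) · g for all z, t, g. Then the map α : Aut_T(E) → G sending Φ to the unique g ∈ G with Φ(e) = e · g is an injective group homomorphism, and its image contains the center Z(G) of G. (Paper: Lemma 2.11, the automorphism group of an equivariant principal G-bundle is a subgroup of G containing Z(G).) -/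
/-!
Since `Φ` preserves the fibres of `pr`, which are the `G`-orbits, `Φ e = e · g` for some `g`,
unique by freeness. A continuous map commuting with both actions is determined by its value at `e`,
because it is then determined on the dense orbit of `e`; this gives injectivity. For central `g`,
right translation by `g` commutes with the right action and is such an automorphism, with `α = g`.
-/

section BundleAut

variable {T G E X : Type*}

-- An `abbrev`, so that its subtype unifies with the conjunction written out in `stmt_9`.
abbrev IsBundleAut [TopologicalSpace E] (actE : T → E → E) (ract : E → G → E) (pr : E → X)
    (Φ : E ≃ E) : Prop :=
  Continuous ⇑Φ ∧ Continuous ⇑Φ.symm ∧ (∀ z, pr (Φ z) = pr z) ∧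
    (∀ t z, Φ (actE t z) = actE t (Φ z)) ∧ (∀ z g, Φ (ract z g) = ract (Φ z) g)

variable {actE : T → E → E} {ract : E → G → E}

theorem eq_of_ract_eq_ract [Group G]
    (hGmul : ∀ z g h, ract z (g * h) = ract (ract z g) h)
    (hfree : ∀ (z : E) (g : G), ract z g = z → g = 1) {z : E} {a b : G}
    (h : ract z a = ract z b) : a = b := by
  have : ract (ract z a) (a⁻¹ * b) = ract z a := by
    rw [← hGmul, mul_inv_cancel_left, h]
  exact inv_mul_eq_one.mp (hfree _ _ this)

theorem exists_apply_eq_ract {pr : E → X}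
    (hfib : ∀ z z', pr z = pr z' ↔ ∃ g : G, z' = ract z g) {Φ : E → E}
    (hΦ : ∀ z, pr (Φ z) = pr z) (e : E) : ∃ g, Φ e = ract e g :=
  (hfib e (Φ e)).mp (hΦ e).symm

theorem eq_of_apply_eq_of_dense_orbit [TopologicalSpace E] [T2Space E] {e : E}
    (hdense : Dense {z : E | ∃ (t : T) (g : G), z = actE t (ract e g)}) {Φ Ψ : E → E}
    (hΦ : Continuous Φ) (hΨ : Continuous Ψ)
    (hΦT : ∀ t z, Φ (actE t z) = actE t (Φ z)) (hΨT : ∀ t z, Ψ (actE t z) = actE t (Ψ z))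
    (hΦG : ∀ z g, Φ (ract z g) = ract (Φ z) g) (hΨG : ∀ z g, Ψ (ract z g) = ract (Ψ z) g)
    (he : Φ e = Ψ e) : Φ = Ψ := by
  refine Continuous.ext_on hdense hΦ hΨ ?_
  rintro z ⟨t, g, rfl⟩
  rw [hΦT, hΨT, hΦG, hΨG, he]

def ractEquiv [Group G] (hG1 : ∀ z, ract z 1 = z)
    (hGmul : ∀ z g h, ract z (g * h) = ract (ract z g) h) (g : G) : E ≃ E where
  toFun z := ract z g
  invFun z := ract z g⁻¹
  left_inv z := by simp only [← hGmul, mul_inv_cancel, hG1]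
  right_inv z := by simp only [← hGmul, inv_mul_cancel, hG1]

theorem isBundleAut_ractEquiv [Group G] [TopologicalSpace G] [TopologicalSpace E] {pr : E → X}
    (hG1 : ∀ z, ract z 1 = z) (hGmul : ∀ z g h, ract z (g * h) = ract (ract z g) h)
    (hGcont : Continuous fun p : E × G => ract p.1 p.2)
    (hcomm : ∀ t z g, actE t (ract z g) = ract (actE t z) g)
    (hfib : ∀ z z', pr z = pr z' ↔ ∃ g : G, z' = ract z g)
    {g : G} (hg : g ∈ Subgroup.center G) :
    IsBundleAut actE ract pr (ractEquiv hG1 hGmul g) := by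
  have hcont (h : G) : Continuous fun z => ract z h := hGcont.comp (.prodMk_left h)
  refine ⟨hcont g, hcont g⁻¹, fun z => ((hfib z _).mpr ⟨g, rfl⟩).symm,
    fun t z => (hcomm t z g).symm, fun z h => ?_⟩
  simp only [ractEquiv, Equiv.coe_fn_mk, ← hGmul, Subgroup.mem_center_iff.mp hg h]

end BundleAut

theorem stmt_9_general {T G E X : Type*}
    [Group G] [TopologicalSpace G]
    [TopologicalSpace E] [T2Space E]
    (actE : T → E → E)
    (ract : E → G → E)
    (hG1 : ∀ z, ract z 1 = z)
    (hGmul : ∀ z g h, ract z (g * h) = ract (ract z g) h)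
    (hGcont : Continuous fun p : E × G => ract p.1 p.2)
    (hcomm : ∀ t z g, actE t (ract z g) = ract (actE t z) g)
    (hfree : ∀ (z : E) (g : G), ract z g = z → g = 1)
    (pr : E → X)
    (hfib : ∀ z z', pr z = pr z' ↔ ∃ g : G, z' = ract z g)
    (e : E)
    (hdense : Dense {z : E | ∃ (t : T) (g : G), z = actE t (ract e g)}) :
    ∃ α : {Φ : E ≃ E // Continuous ⇑Φ ∧ Continuous ⇑Φ.symm ∧
        (∀ z, pr (Φ z) = pr z) ∧
        (∀ t z, Φ (actE t z) = actE t (Φ z)) ∧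
        (∀ z g, Φ (ract z g) = ract (Φ z) g)} → G,
      (∀ Φ, Φ.1 e = ract e (α Φ)) ∧
      Function.Injective α ∧
      (∀ Φ Ψ Ξ, (∀ z : E, Ξ.1 z = Φ.1 (Ψ.1 z)) → α Ξ = α Φ * α Ψ) ∧
      (∀ g ∈ Subgroup.center G, ∃ Φ, α Φ = g) := by
  choose α hα using fun Φ : {Φ : E ≃ E // IsBundleAut actE ract pr Φ} =>
    exists_apply_eq_ract hfib Φ.2.2.2.1 e
  refine ⟨α, hα, fun Φ Ψ hαΦΨ => ?_, fun Φ Ψ Ξ hΞ => ?_, fun g hg => ?_⟩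
  · obtain ⟨hΦ, -, -, hΦT, hΦG⟩ := Φ.2
    obtain ⟨hΨ, -, -, hΨT, hΨG⟩ := Ψ.2
    have he : Φ.1 e = Ψ.1 e := by rw [hα, hα, hαΦΨ]
    exact Subtype.ext (Equiv.coe_fn_injective
      (eq_of_apply_eq_of_dense_orbit hdense hΦ hΨ hΦT hΨT hΦG hΨG he))
  · obtain ⟨-, -, -, -, hΦG⟩ := Φ.2
    apply eq_of_ract_eq_ract hGmul hfree (z := e)
    have hΞe := hα Ξ
    rwa [hΞ, hα Ψ, hΦG, hα Φ, ← hGmul, eq_comm] at hΞe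
  · let Φ : {Φ : E ≃ E // IsBundleAut actE ract pr Φ} :=
      ⟨ractEquiv hG1 hGmul g, isBundleAut_ractEquiv hG1 hGmul hGcont hcomm hfib hg⟩
    exact ⟨Φ, eq_of_ract_eq_ract hGmul hfree (hα Φ).symm⟩

/-- Lemma 2.11: the group of T-equivariant automorphisms of an equivariant
principal G-bundle embeds into G via evaluation at a point e with dense
combined orbit, and the image contains the center of G. -/
theorem stmt_9 {T G E X : Type*}
    [Group T] [TopologicalSpace T] [IsTopologicalGroup T]
    [Group G] [TopologicalSpace G] [IsTopologicalGroup G]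
    [TopologicalSpace E] [T2Space E]
    (actE : T → E → E)
    (hE1 : ∀ z, actE 1 z = z)
    (hEmul : ∀ t u z, actE (t * u) z = actE t (actE u z))
    (hEcont : Continuous fun p : T × E => actE p.1 p.2)
    (ract : E → G → E)
    (hG1 : ∀ z, ract z 1 = z)
    (hGmul : ∀ z g h, ract z (g * h) = ract (ract z g) h)
    (hGcont : Continuous fun p : E × G => ract p.1 p.2)
    (hcomm : ∀ t z g, actE t (ract z g) = ract (actE t z) g)
    (hfree : ∀ (z : E) (g : G), ract z g = z → g = 1)
    (pr : E → X)
    (hfib : ∀ z z', pr z = pr z' ↔ ∃ g : G, z' = ract z g)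
    (e : E)
    (hdense : Dense {z : E | ∃ (t : T) (g : G), z = actE t (ract e g)}) :
    ∃ α : {Φ : E ≃ E // Continuous ⇑Φ ∧ Continuous ⇑Φ.symm ∧
        (∀ z, pr (Φ z) = pr z) ∧
        (∀ t z, Φ (actE t z) = actE t (Φ z)) ∧
        (∀ z g, Φ (ract z g) = ract (Φ z) g)} → G,
      (∀ Φ, Φ.1 e = ract e (α Φ)) ∧
      Function.Injective α ∧
      (∀ Φ Ψ Ξ, (∀ z : E, Ξ.1 z = Φ.1 (Ψ.1 z)) → α Ξ = α Φ * α Ψ) ∧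
      (∀ g ∈ Subgroup.center G, ∃ Φ, α Φ = g) :=
  stmt_9_general actE ract hG1 hGmul hGcont hcomm hfree pr hfib e hdense
end

section
/- Let H and K be groups, T = H × K, A a set with a left H-action, and X = A × K with the T-action (h, k) • (a, k') = (h • a, k·k'). Let E carry commuting left T- and right G-actions and π : E → X be T-equivariant with G free and transitive on fibers. Suppose s₀ : A → E satisfies π(s₀(a)) = (a, 1) for all a ∈ A, and there is a map ρ : H → G with (h, 1) • s₀(a) = s₀(h • a) · ρ(h) for all h ∈ H, a ∈ A. Define s : X → E by s(a, k) = (1, k) • s₀(a). Then s is a section of π, and its local action function satisfies ρ_s((a, k'), (h, k)) = ρ(h) for all a ∈ A, k, k' ∈ K, h ∈ H; in particular ρ_s is independent of the point of X and factors through the projection T → H × {1}, i.e. s is a distinguished section. (Paper: the extension construction, equations (2.3)–(2.5), in the proof of Lemma 2.8.) -/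
theorem stmt_10_general {H K G A E : Type*} [Group H] [Group K] [Group G]
    (actA : H → A → A)
    (hA1 : ∀ a, actA 1 a = a)
    (actE : H × K → E → E)
    (hEmul : ∀ t u z, actE (t * u) z = actE t (actE u z))
    (ract : E → G → E)
    (hcomm : ∀ t z g, actE t (ract z g) = ract (actE t z) g)
    (pr : E → A × K)
    (hpr : ∀ (t : H × K) (z : E),
      pr (actE t z) = (actA t.1 (pr z).1, t.2 * (pr z).2))
    (s₀ : A → E) (hs₀ : ∀ a, pr (s₀ a) = (a, 1))
    (ρ : H → G)
    (hρ : ∀ (h : H) (a : A), actE (h, 1) (s₀ a) = ract (s₀ (actA h a)) (ρ h))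
    (s : A × K → E) (hsdef : ∀ p : A × K, s p = actE (1, p.2) (s₀ p.1)) :
    (∀ p : A × K, pr (s p) = p) ∧
      (∀ (a : A) (k' : K) (h : H) (k : K),
        actE (h, k) (s (a, k')) = ract (s (actA h a, k * k')) (ρ h)) := by
  refine ⟨fun ⟨a, k⟩ => by simp [hsdef, hpr, hs₀, hA1], fun a k' h k => ?_⟩
  have hswap : ((h, k) : H × K) * (1, k') = (1, k * k') * (h, 1) := by simp
  rw [hsdef, hsdef, ← hEmul, hswap, hEmul, hρ, hcomm]

/-- The extension construction (equations (2.3)–(2.5) in Lemma 2.8):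
extending a section over A × {1} by the K-action produces a distinguished
section of the bundle over X = A × K. -/
theorem stmt_10 {H K G A E : Type*} [Group H] [Group K] [Group G]
    (actA : H → A → A)
    (hA1 : ∀ a, actA 1 a = a)
    (hAmul : ∀ h h' a, actA (h * h') a = actA h (actA h' a))
    (actE : H × K → E → E)
    (hE1 : ∀ z, actE 1 z = z)
    (hEmul : ∀ t u z, actE (t * u) z = actE t (actE u z))
    (ract : E → G → E)
    (hG1 : ∀ z, ract z 1 = z)
    (hGmul : ∀ z g g', ract z (g * g') = ract (ract z g) g')
    (hcomm : ∀ t z g, actE t (ract z g) = ract (actE t z) g)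
    (pr : E → A × K)
    (hpr : ∀ (t : H × K) (z : E),
      pr (actE t z) = (actA t.1 (pr z).1, t.2 * (pr z).2))
    (hfib : ∀ z z', pr z = pr z' → ∃! g : G, z' = ract z g)
    (s₀ : A → E) (hs₀ : ∀ a, pr (s₀ a) = (a, 1))
    (ρ : H → G)
    (hρ : ∀ (h : H) (a : A), actE (h, 1) (s₀ a) = ract (s₀ (actA h a)) (ρ h))
    (s : A × K → E) (hsdef : ∀ p : A × K, s p = actE (1, p.2) (s₀ p.1)) :
    (∀ p : A × K, pr (s p) = p) ∧
      (∀ (a : A) (k' : K) (h : H) (k : K),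
        actE (h, k) (s (a, k')) = ract (s (actA h a, k * k')) (ρ h)) :=
  stmt_10_general actA hA1 actE hEmul ract hcomm pr hpr s₀ hs₀ ρ hρ s hsdef
end

section
/- Let F be a field, r ≥ 1, and P an r × r matrix over F with det P ≠ 0. Let S be a set and let a, b : S → (Fin r → ℤ) be families of integer vectors such that: (i) for every η ∈ S and all indices i, j, if P_{ij} ≠ 0 then a_η(i) ≥ b_η(j); and (ii) for every η ∈ S, ∑_{i} a_η(i) = ∑_{i} b_η(i). Then there exists a single permutation γ of {1, …, r} such that a_η(i) = b_η(γ(i)) for every η ∈ S and every i. (Paper: Lemma 4.4, the combinatorial core: with a_η(i) = η(ξ^τ_i) and b_η(j) = η(ξ^σ_j), there is a permutation γ with η(ξ^τ_i) = η(ξ^σ_{γ(i)}) for all η ∈ σ ∩ τ ∩ Ξ(1).) -/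
/-!
A nonzero determinant has a nonzero term in its Leibniz expansion, i.e. a permutation `γ` with
`P i (γ i) ≠ 0` for all `i`. Then `b η (γ i) ≤ a η i` for every `i`, and since reindexing by `γ`
does not change `∑ i, b η i`, the equality of the sums forces every one of these inequalities to be
an equality.
-/

open Finset

theorem Matrix.exists_perm_forall_ne_zero_of_det_ne_zero {n R : Type*} [Fintype n]
    [DecidableEq n] [CommRing R] {M : Matrix n n R} (hM : M.det ≠ 0) :
    ∃ σ : Equiv.Perm n, ∀ i, M i (σ i) ≠ 0 := by
  by_contra! h
  apply hM
  rw [← Matrix.det_transpose, Matrix.det_apply']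
  refine sum_eq_zero fun σ _ => ?_
  obtain ⟨i, hi⟩ := h σ
  rw [prod_eq_zero (mem_univ i) (by simpa using hi), mul_zero]

theorem Equiv.Perm.apply_eq_comp_of_comp_le_of_sum_eq {ι M : Type*} [Fintype ι]
    [AddCommMonoid M] [PartialOrder M] [IsOrderedCancelAddMonoid M]
    {f g : ι → M} (σ : Equiv.Perm ι) (hle : ∀ i, g (σ i) ≤ f i) (hsum : ∑ i, f i = ∑ i, g i)
    (i : ι) : f i = g (σ i) := by
  have hsum' : ∑ i, g (σ i) = ∑ i, f i := by rw [hsum, Equiv.sum_comp σ g]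
  exact ((sum_eq_sum_iff_of_le fun i _ => hle i).mp hsum' i (mem_univ i)).symm

theorem stmt_11_general {F : Type*} [Field F] (r : ℕ)
    (P : Matrix (Fin r) (Fin r) F) (hP : P.det ≠ 0)
    {S : Type*} (a b : S → Fin r → ℤ)
    (h1 : ∀ (η : S) (i j : Fin r), P i j ≠ 0 → b η j ≤ a η i)
    (h2 : ∀ η : S, ∑ i, a η i = ∑ i, b η i) :
    ∃ γ : Equiv.Perm (Fin r), ∀ (η : S) (i : Fin r), a η i = b η (γ i) := by
  obtain ⟨γ, hγ⟩ := Matrix.exists_perm_forall_ne_zero_of_det_ne_zero hP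
  exact ⟨γ, fun η => γ.apply_eq_comp_of_comp_le_of_sum_eq (fun i => h1 η i (γ i) (hγ i)) (h2 η)⟩

/-- Lemma 4.4 (combinatorial core): if P is invertible, P_{ij} ≠ 0 forces
a_η(i) ≥ b_η(j), and the total sums agree for each η, then a single
permutation γ matches a_η(i) with b_η(γ(i)) for all η and i. -/
theorem stmt_11 {F : Type*} [Field F] (r : ℕ) (hr : 1 ≤ r)
    (P : Matrix (Fin r) (Fin r) F) (hP : P.det ≠ 0)
    {S : Type*} (a b : S → Fin r → ℤ)
    (h1 : ∀ (η : S) (i j : Fin r), P i j ≠ 0 → b η j ≤ a η i)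
    (h2 : ∀ η : S, ∑ i, a η i = ∑ i, b η i) :
    ∃ γ : Equiv.Perm (Fin r), ∀ (η : S) (i : Fin r), a η i = b η (γ i) :=
  stmt_11_general r P hP a b h1 h2
end
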